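/- arXiv:2212.01632 — 5 statements merged into one kernel-verified Lean document; each statement's English description precedes it below -/
import Mathlib

section
/- Let p, q, w, L be real numbers and let b1, b2, m : ℝ → ℝ be continuous functions. Suppose M : ℝ → ℝ is differentiable with M'(t) = m(t) for all t, G : ℝ → ℝ is differentiable with G'(t) = b1(t)·(q + M(t)) and G(t) ≠ 0 for all t, and K : ℝ → ℝ is differentiable with K'(t) = b2(t)·(q + M(t))/G(t)² for all t. Define u(x,t) = q + M(t) + L·tanh( w + L·x/(2·G(t)) − (L/2)·K(t) ). Then u solves the variable-coefficient forced Burgers equation ∂u/∂t + a(x,t)·u·∂u/∂x + b(x,t)·∂²u/∂x² − m(t) = 0 for all (x,t) ∈ ℝ², where a(x,t) = (x·b1(t) + b2(t))/G(t) and b(x,t) = x·b1(t) + b2(t). -/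
/-!
Writing `T = tanh θ` for the phase `θ = w + L x / (2 G) - (L/2) K`, the chain rule gives
`u_x = L² (1 - T²) / (2G)`, `u_xx = -L³ T (1 - T²) / (2G²)` and, since `G' = b1 (q + M)` and
`K' = b2 (q + M) / G²`, `u_t = m - L² (q + M)(x b1 + b2)(1 - T²) / (2G²)`. The advection term
`a u u_x` splits along `u = q + M + L T`: its `q + M` part cancels `u_t - m` and its `L T` part
cancels the diffusion term `b u_xx`.
-/

open Real

theorem Real.hasDerivAt_tanh (x : ℝ) : HasDerivAt tanh (1 - tanh x ^ 2) x := by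
  have hcosh : cosh x ≠ 0 := (cosh_pos x).ne'
  have h := (hasDerivAt_sinh x).div (hasDerivAt_cosh x) hcosh
  rw [show tanh = sinh / cosh from funext tanh_eq_sinh_div_cosh]
  refine h.congr_deriv ?_
  simp only [Pi.div_apply]
  field_simp

theorem HasDerivAt.tanh {f : ℝ → ℝ} {f' x : ℝ} (hf : HasDerivAt f f' x) :
    HasDerivAt (fun y => Real.tanh (f y)) ((1 - Real.tanh (f x) ^ 2) * f') x :=
  (Real.hasDerivAt_tanh (f x)).comp x hf

section Kink

variable {θ : ℝ → ℝ} {k : ℝ} (c L : ℝ)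

theorem deriv_const_add_mul_tanh (hθ : ∀ y, HasDerivAt θ k y) :
    deriv (fun y => c + L * tanh (θ y)) = fun y => L * k * (1 - tanh (θ y) ^ 2) := by
  funext y
  rw [(((hθ y).tanh.const_mul L).const_add c).deriv]
  ring

theorem hasDerivAt_deriv_const_add_mul_tanh (hθ : ∀ y, HasDerivAt θ k y) (x : ℝ) :
    HasDerivAt (deriv (fun y => c + L * tanh (θ y)))
      (-2 * L * k ^ 2 * tanh (θ x) * (1 - tanh (θ x) ^ 2)) x := by
  rw [deriv_const_add_mul_tanh c L hθ]
  exact ((((hθ x).tanh.pow 2).const_sub 1).const_mul (L * k)).congr_deriv (by ring)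

end Kink

theorem hasDerivAt_const_add_div_sub_mul {G K : ℝ → ℝ} {G' K' t : ℝ} (hG : HasDerivAt G G' t)
    (hK : HasDerivAt K K' t) (hGt : G t ≠ 0) (w L x : ℝ) :
    HasDerivAt (fun s => w + L * x / (2 * G s) - L / 2 * K s)
      (-(L * x * G') / (2 * G t ^ 2) - L / 2 * K') t := by
  have hinv : HasDerivAt (fun s => (2 * G s)⁻¹) _ t :=
    (hG.const_mul 2).inv (mul_ne_zero two_ne_zero hGt)
  have h : HasDerivAt (fun s => w + L * x * (2 * G s)⁻¹ - L / 2 * K s) _ t :=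
    ((hinv.const_mul (L * x)).const_add w).sub (hK.const_mul (L / 2))
  simp only [← div_eq_mul_inv] at h
  refine h.congr_deriv ?_
  field_simp

theorem vcFBE_general_solution_general
    (q w L : ℝ) (b1 b2 m M G K : ℝ → ℝ)
    (hM : ∀ t, HasDerivAt M (m t) t)
    (hG : ∀ t, HasDerivAt G (b1 t * (q + M t)) t)
    (hGne : ∀ t, G t ≠ 0)
    (hK : ∀ t, HasDerivAt K (b2 t * (q + M t) / (G t) ^ 2) t)
    (u : ℝ → ℝ → ℝ)
    (hu : ∀ x t, u x t =
      q + M t + L * Real.tanh (w + L * x / (2 * G t) - L / 2 * K t)) :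
    ∀ x t : ℝ,
      deriv (fun t' => u x t') t
        + ((x * b1 t + b2 t) / G t) * u x t * deriv (fun x' => u x' t) x
        + (x * b1 t + b2 t) * deriv (deriv (fun x' => u x' t)) x
        - m t = 0 := by
  intro x t
  simp only [hu]
  have hphase_x (y : ℝ) : HasDerivAt (fun x' => w + L * x' / (2 * G t) - L / 2 * K t)
      (L * 1 / (2 * G t)) y :=
    ((((hasDerivAt_id y).const_mul L).div_const (2 * G t)).const_add w).sub_const _
  have hu_t : HasDerivAt (fun t' => q + M t' + L * tanh (w + L * x / (2 * G t') - L / 2 * K t'))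
      _ t := ((hM t).const_add q).add
    ((hasDerivAt_const_add_div_sub_mul (hG t) (hK t) (hGne t) w L x).tanh.const_mul L)
  rw [hu_t.deriv, (hasDerivAt_deriv_const_add_mul_tanh (q + M t) L hphase_x x).deriv,
    deriv_const_add_mul_tanh (q + M t) L hphase_x]
  have hGt := hGne t
  field_simp
  ring

/-- The general first-order soliton-like solution (Eq. (22) of the paper)
solves the variable-coefficient forced Burgers equation
`u_t + a(x,t)·u·u_x + b(x,t)·u_xx − m(t) = 0`
with `a(x,t) = (x·b1(t) + b2(t))/G(t)` and `b(x,t) = x·b1(t) + b2(t)`. -/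
theorem vcFBE_general_solution
    (p q w L : ℝ) (b1 b2 m M G K : ℝ → ℝ)
    (hb1 : Continuous b1) (hb2 : Continuous b2) (hm : Continuous m)
    (hM : ∀ t, HasDerivAt M (m t) t)
    (hG : ∀ t, HasDerivAt G (b1 t * (q + M t)) t)
    (hGne : ∀ t, G t ≠ 0)
    (hK : ∀ t, HasDerivAt K (b2 t * (q + M t) / (G t) ^ 2) t)
    (u : ℝ → ℝ → ℝ)
    (hu : ∀ x t, u x t =
      q + M t + L * Real.tanh (w + L * x / (2 * G t) - L / 2 * K t)) :
    ∀ x t : ℝ,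
      deriv (fun t' => u x t') t
        + ((x * b1 t + b2 t) / G t) * u x t * deriv (fun x' => u x' t) x
        + (x * b1 t + b2 t) * deriv (deriv (fun x' => u x' t)) x
        - m t = 0 :=
  vcFBE_general_solution_general q w L b1 b2 m M G K hM hG hGne hK u hu
end

section
/- The function u(x,t) = 10 + 4·tanh(6 + 1.6·t + (4/15)·t³ − 0.4·x) solves the variable-coefficient forced Burgers equation u_t + ((2 + t²)/5)·u·u_x − (2 + t²)·u_xx = 0 for all (x,t) ∈ ℝ². (This is the vc-FBE with time-dependent nonlinear coefficient a(t) = (2 + t²)/5, time-dependent dispersive coefficient b(t) = −2 − t² and vanishing external-force term, arising from the parameter choice b1 = 0, b2(t) = −2 − t², m = 0, p = −5, q = 10, L = 4, w = 6.) -/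
/-!
With `T = tanh (θ t - k x)` every derivative of the kink `u = q + L T` is a polynomial in `T`,
because `tanh' = 1 - tanh ^ 2`. Substituting, `u_t + a u u_x + b u_xx` factors as
`L (1 - T²) (θ' - a k q - k (a L + 2 b k) T)`, so the kink solves the equation as soon as
`θ' = a k q` and `a L + 2 b k = 0`. For the example, `θ t = 6 + 1.6 t + (4/15) t³`, `q = 10`,
`L = 4`, `k = 0.4`, `a = (2 + t²)/5` and `b = -(2 + t²)`.
-/

open Real

section Kink

variable (q L k : ℝ)

theorem hasDerivAt_kink_time {θ : ℝ → ℝ} {θ' t : ℝ} (x : ℝ) (hθ : HasDerivAt θ θ' t) :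
    HasDerivAt (fun t' => q + L * tanh (θ t' - k * x))
      (L * ((1 - tanh (θ t - k * x) ^ 2) * θ')) t :=
  ((hθ.sub_const (k * x)).tanh.const_mul L).const_add q

theorem hasDerivAt_kink_space (c x : ℝ) :
    HasDerivAt (fun x' => q + L * tanh (c - k * x'))
      (-(L * k) * (1 - tanh (c - k * x) ^ 2)) x := by
  have hphase : HasDerivAt (fun x' => c - k * x') (-k) x := by
    simpa using ((hasDerivAt_id x).const_mul k).const_sub c
  exact ((hphase.tanh.const_mul L).const_add q).congr_deriv (by ring)

theorem deriv_kink_space (c : ℝ) :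
    deriv (fun x' => q + L * tanh (c - k * x')) =
      fun x => -(L * k) * (1 - tanh (c - k * x) ^ 2) :=
  funext fun x => (hasDerivAt_kink_space q L k c x).deriv

theorem deriv_deriv_kink_space (c x : ℝ) :
    deriv (deriv (fun x' => q + L * tanh (c - k * x'))) x =
      -2 * L * k ^ 2 * tanh (c - k * x) * (1 - tanh (c - k * x) ^ 2) := by
  rw [deriv_kink_space]
  have hT := hasDerivAt_kink_space 0 1 k c x
  simp only [zero_add, one_mul] at hT
  rw [(((hT.fun_pow 2).const_sub 1).const_mul (-(L * k))).deriv]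
  ring

theorem kink_solves_burgers {θ : ℝ → ℝ} {θ' a b x t : ℝ} (hθ : HasDerivAt θ θ' t)
    (hphase : θ' = a * k * q) (hamp : a * L + 2 * b * k = 0) :
    deriv (fun t' => q + L * tanh (θ t' - k * x)) t
      + a * (q + L * tanh (θ t - k * x)) * deriv (fun x' => q + L * tanh (θ t - k * x')) x
      + b * deriv (deriv (fun x' => q + L * tanh (θ t - k * x'))) x = 0 := by
  rw [(hasDerivAt_kink_time q L k x hθ).deriv, deriv_deriv_kink_space, deriv_kink_space, hphase]
  set T := tanh (θ t - k * x)
  linear_combination (-L * (1 - T ^ 2) * k * T) * hamp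

end Kink

/-- `u(x,t) = 10 + 4·tanh(6 + 1.6·t + (4/15)·t³ − 0.4·x)` solves
`u_t + ((2 + t²)/5)·u·u_x − (2 + t²)·u_xx = 0` on all of ℝ². -/
theorem example2_solves_vcFBE :
    ∀ x t : ℝ,
      deriv (fun t' => 10 + 4 * Real.tanh (6 + 1.6 * t' + (4 / 15) * t' ^ 3 - 0.4 * x)) t
        + ((2 + t ^ 2) / 5) * (10 + 4 * Real.tanh (6 + 1.6 * t + (4 / 15) * t ^ 3 - 0.4 * x))
            * deriv (fun x' => 10 + 4 * Real.tanh (6 + 1.6 * t + (4 / 15) * t ^ 3 - 0.4 * x')) x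
        - (2 + t ^ 2) *
            deriv (deriv (fun x' => 10 + 4 * Real.tanh (6 + 1.6 * t + (4 / 15) * t ^ 3 - 0.4 * x'))) x
        = 0 := by
  intro x t
  have hθ : HasDerivAt (fun t' : ℝ => 6 + 1.6 * t' + (4 / 15) * t' ^ 3)
      (1.6 + (4 / 5) * t ^ 2) t := by
    have h := (((hasDerivAt_id t).const_mul (1.6 : ℝ)).const_add 6).add
      ((hasDerivAt_pow 3 t).const_mul (4 / 15 : ℝ))
    exact h.congr_deriv (by norm_num; ring)
  have h := kink_solves_burgers 10 4 0.4 (a := (2 + t ^ 2) / 5) (b := -(2 + t ^ 2)) (x := x) hθ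
    (by ring) (by ring)
  simpa only [neg_mul, ← sub_eq_add_neg] using h
end

section
/- The function u(x,t) = 10 − (1/2)·cos(5 + t) + 4·tanh(6 + 1.6·t + (4/15)·t³ − 0.4·x − (t²/25)·sin(5 + t) − (2·t/25)·cos(5 + t)) solves the variable-coefficient forced Burgers equation u_t + ((2 + t²)/5)·u·u_x − (2 + t²)·u_xx = (1/2)·sin(5 + t) for all (x,t) ∈ ℝ². (This is the vc-FBE with both a variable dispersive coefficient b(t) = −(2 + t²) and a variable external-force term m(t) = (1/2)·sin(t + 5), arising from b1 = 0, b2(t) = −2 − t², p = −5, q = 10, L = 4, w = 6 in the general solution formula; the two variable coefficients change both the amplitude of the background and the velocity of the soliton.) -/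
/-!
The solution is a tanh front `u = B(t) + L tanh θ(x,t)` on the moving background
`B(t) = 10 - cos(5+t)/2`, whose slope `B' = sin(5+t)/2` is the forcing. With `T = tanh θ`,
`θ_x = k` and `1 - T²` the derivative of `tanh`, the residual `u_t + a u u_x + b u_xx - B'` is
`L (1 - T²) (θ_t + a k B + (a k L - 2 b k²) T)`. It vanishes once the phase is transported by the
background, `θ_t = -a k B`, and the nonlinearity balances the dispersion, `a L = 2 b k`; both hold
here with `a = (2+t²)/5`, `b = -(2+t²)`, `k = -2/5`, `L = 4`.
-/

open Real

section TanhFront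

variable {θ : ℝ → ℝ → ℝ} {B : ℝ → ℝ} {k θ' B' L x t : ℝ}

theorem hasDerivAt_tanhFront_x (hθx : ∀ y, HasDerivAt (θ · t) k y) (y : ℝ) :
    HasDerivAt (fun x' => B t + L * tanh (θ x' t)) (L * k * (1 - tanh (θ y t) ^ 2)) y :=
  (((hθx y).tanh.const_mul L).const_add (B t)).congr_deriv (by ring)

theorem deriv_deriv_tanhFront_x (hθx : ∀ y, HasDerivAt (θ · t) k y) :
    deriv (deriv fun x' => B t + L * tanh (θ x' t)) x
      = -2 * L * k ^ 2 * tanh (θ x t) * (1 - tanh (θ x t) ^ 2) := by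
  have hux : deriv (fun x' => B t + L * tanh (θ x' t))
      = fun y => L * k * (1 - tanh (θ y t) ^ 2) :=
    funext fun y => (hasDerivAt_tanhFront_x hθx y).deriv
  rw [hux]
  exact ((((hθx x).tanh.pow 2).const_sub 1).const_mul (L * k)).deriv.trans (by ring)

theorem hasDerivAt_tanhFront_t (hθt : HasDerivAt (θ x) θ' t) (hB : HasDerivAt B B' t) :
    HasDerivAt (fun t' => B t' + L * tanh (θ x t')) (B' + L * θ' * (1 - tanh (θ x t) ^ 2)) t :=
  (hB.add (hθt.tanh.const_mul L)).congr_deriv (by ring)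

theorem tanhFront_solves_forcedBurgers (a b : ℝ) (hθx : ∀ y, HasDerivAt (θ · t) k y)
    (hθt : HasDerivAt (θ x) θ' t) (hB : HasDerivAt B B' t)
    (hphase : θ' = -a * k * B t) (hbalance : a * L = 2 * b * k) :
    deriv (fun t' => B t' + L * tanh (θ x t')) t
      + a * (B t + L * tanh (θ x t)) * deriv (fun x' => B t + L * tanh (θ x' t)) x
      + b * deriv (deriv fun x' => B t + L * tanh (θ x' t)) x = B' := by
  rw [(hasDerivAt_tanhFront_t hθt hB).deriv, (hasDerivAt_tanhFront_x hθx x).deriv,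
    deriv_deriv_tanhFront_x hθx, hphase]
  linear_combination k * tanh (θ x t) * (1 - tanh (θ x t) ^ 2) * L * hbalance

end TanhFront

noncomputable def example4Phase (x t : ℝ) : ℝ :=
  6 + 1.6 * t + (4 / 15) * t ^ 3 - 0.4 * x - (t ^ 2 / 25) * sin (5 + t) - (2 * t / 25) * cos (5 + t)

theorem hasDerivAt_example4Phase_x (t y : ℝ) : HasDerivAt (example4Phase · t) (-0.4) y := by
  simpa [example4Phase] using
    ((((hasDerivAt_id y).const_mul (0.4 : ℝ)).const_sub
      (6 + 1.6 * t + (4 / 15) * t ^ 3)).sub_const ((t ^ 2 / 25) * sin (5 + t))).sub_const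
      ((2 * t / 25) * cos (5 + t))

theorem hasDerivAt_example4Phase_t (x t : ℝ) :
    HasDerivAt (example4Phase x) ((2 + t ^ 2) * (4 / 5 - cos (5 + t) / 25)) t := by
  have hshift : HasDerivAt (fun t' : ℝ => 5 + t') 1 t := (hasDerivAt_id t).const_add 5
  have hsin := (hasDerivAt_sin (5 + t)).comp t hshift
  have hcos := (hasDerivAt_cos (5 + t)).comp t hshift
  have hpoly := (((hasDerivAt_id t).const_mul (1.6 : ℝ)).const_add 6).add
    ((hasDerivAt_pow 3 t).const_mul (4 / 15 : ℝ))
  refine (((hpoly.sub_const (0.4 * x)).sub (((hasDerivAt_pow 2 t).div_const 25).mul hsin)).sub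
    ((((hasDerivAt_id t).const_mul 2).div_const 25).mul hcos)).congr_deriv ?_
  simp only [id]
  norm_num
  ring

/-- `u(x,t) = 10 − (1/2)·cos(5+t)
+ 4·tanh(6 + 1.6t + (4/15)t³ − 0.4x − (t²/25)·sin(5+t) − (2t/25)·cos(5+t))`
solves `u_t + ((2 + t²)/5)·u·u_x − (2 + t²)·u_xx = (1/2)·sin(5+t)` on all of ℝ². -/
theorem example4_solves_vcFBE :
    ∀ x t : ℝ,
      deriv (fun t' => 10 - (1 / 2) * Real.cos (5 + t')
          + 4 * Real.tanh (6 + 1.6 * t' + (4 / 15) * t' ^ 3 - 0.4 * x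
              - (t' ^ 2 / 25) * Real.sin (5 + t') - (2 * t' / 25) * Real.cos (5 + t'))) t
        + ((2 + t ^ 2) / 5) * (10 - (1 / 2) * Real.cos (5 + t)
            + 4 * Real.tanh (6 + 1.6 * t + (4 / 15) * t ^ 3 - 0.4 * x
                - (t ^ 2 / 25) * Real.sin (5 + t) - (2 * t / 25) * Real.cos (5 + t)))
            * deriv (fun x' => 10 - (1 / 2) * Real.cos (5 + t)
                + 4 * Real.tanh (6 + 1.6 * t + (4 / 15) * t ^ 3 - 0.4 * x'
                    - (t ^ 2 / 25) * Real.sin (5 + t) - (2 * t / 25) * Real.cos (5 + t))) x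
        - (2 + t ^ 2) * deriv (deriv (fun x' => 10 - (1 / 2) * Real.cos (5 + t)
                + 4 * Real.tanh (6 + 1.6 * t + (4 / 15) * t ^ 3 - 0.4 * x'
                    - (t ^ 2 / 25) * Real.sin (5 + t) - (2 * t / 25) * Real.cos (5 + t)))) x
        = (1 / 2) * Real.sin (5 + t) := by
  intro x t
  have hbackground : HasDerivAt (fun t' => 10 - 1 / 2 * cos (5 + t')) (1 / 2 * sin (5 + t)) t := by
    simpa using (((hasDerivAt_cos (5 + t)).comp t
      ((hasDerivAt_id t).const_add 5)).const_mul (1 / 2 : ℝ)).const_sub 10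
  have key := tanhFront_solves_forcedBurgers (L := 4) ((2 + t ^ 2) / 5) (-(2 + t ^ 2))
    (hasDerivAt_example4Phase_x t) (hasDerivAt_example4Phase_t x t) hbackground
    (by ring) (by ring)
  rw [sub_eq_add_neg, ← neg_mul]
  exact key
end

section
/- Let c > 0 and τ ≠ 0 be reals and set the D1Q3 discrete velocities c₀ = 0, c₁ = c, c₂ = −c. Let f⁰ᵢ, f¹ᵢ, f²ᵢ, hᵢ : ℝ × ℝ → ℝ (i = 0,1,2) and m₁ : ℝ × ℝ → ℝ be functions, each sufficiently smooth, satisfying for all (x,t): (i) Σᵢ f¹ᵢ = 0 and Σᵢ f²ᵢ = 0; (ii) for each i the first-order relation ∂ₓ(cᵢ·f⁰ᵢ) + (1/τ)·f¹ᵢ − hᵢ = 0; and (iii) for each i the second-order relation ∂ₜ f⁰ᵢ + ∂ₓ(cᵢ·f¹ᵢ) + (1/2)·∂ₓₓ(cᵢ²·f⁰ᵢ) + (1/τ)·f²ᵢ − m₁/3 = 0 (where cᵢ·f¹ᵢ and cᵢ²·f⁰ᵢ have the required x-derivatives, interchangeable where summed). Then the macroscopic variable u = Σᵢ f⁰ᵢ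 satisfies the macroscopic equation ∂u/∂t + (1/2 − τ)·∂²F₂/∂x² + τ·∂H₁/∂x = m₁ at every (x,t), where F₂ = Σᵢ cᵢ²·f⁰ᵢ and H₁ = Σᵢ cᵢ·hᵢ. -/
/-- combining the first- and second-order Chapman–Enskog relations of the
D1Q3 model with the conservation constraints `Σᵢ f¹ᵢ = 0`, `Σᵢ f²ᵢ = 0`, the macroscopic
variable `u = Σᵢ f⁰ᵢ` satisfies `∂u/∂t + (1/2 − τ)·∂²F₂/∂x² + τ·∂H₁/∂x = m₁`,
where `F₂ = Σᵢ cᵢ²·f⁰ᵢ` and `H₁ = Σᵢ cᵢ·hᵢ`. -/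
theorem macroscopic_equation_recovered
    (c τ : ℝ) (hc : 0 < c) (hτ : τ ≠ 0)
    (cv : Fin 3 → ℝ) (hcv0 : cv 0 = 0) (hcv1 : cv 1 = c) (hcv2 : cv 2 = -c)
    (f0 f1 f2 h : Fin 3 → ℝ → ℝ → ℝ) (m1 : ℝ → ℝ → ℝ)
    (hsmooth0 : ∀ i, ContDiff ℝ (⊤ : ℕ∞) (fun p : ℝ × ℝ => f0 i p.1 p.2))
    (hsmooth1 : ∀ i, ContDiff ℝ (⊤ : ℕ∞) (fun p : ℝ × ℝ => f1 i p.1 p.2))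
    (hsmooth2 : ∀ i, ContDiff ℝ (⊤ : ℕ∞) (fun p : ℝ × ℝ => f2 i p.1 p.2))
    (hsmoothh : ∀ i, ContDiff ℝ (⊤ : ℕ∞) (fun p : ℝ × ℝ => h i p.1 p.2))
    (hsmoothm : ContDiff ℝ (⊤ : ℕ∞) (fun p : ℝ × ℝ => m1 p.1 p.2))
    (hcons1 : ∀ x t : ℝ, (∑ i : Fin 3, f1 i x t) = 0)
    (hcons2 : ∀ x t : ℝ, (∑ i : Fin 3, f2 i x t) = 0)
    (hrel1 : ∀ i x t,
      deriv (fun x' => cv i * f0 i x' t) x + (1 / τ) * f1 i x t - h i x t = 0)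
    (hrel2 : ∀ i x t,
      deriv (fun t' => f0 i x t') t
        + deriv (fun x' => cv i * f1 i x' t) x
        + (1 / 2) * deriv (deriv (fun x' => cv i ^ 2 * f0 i x' t)) x
        + (1 / τ) * f2 i x t - m1 x t / 3 = 0) :
    ∀ x t : ℝ,
      deriv (fun t' => ∑ i : Fin 3, f0 i x t') t
        + (1 / 2 - τ) * deriv (deriv (fun x' => ∑ i : Fin 3, cv i ^ 2 * f0 i x' t)) x
        + τ * deriv (fun x' => ∑ i : Fin 3, cv i * h i x' t) x
        = m1 x t := by
  intro x t
  -- partial smoothness in x (for fixed t) and in t (for fixed x)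
  have px : ∀ (F : ℝ → ℝ → ℝ), ContDiff ℝ (⊤ : ℕ∞) (fun p : ℝ × ℝ => F p.1 p.2) →
      ∀ t₀ : ℝ, ContDiff ℝ (⊤ : ℕ∞) (fun x' => F x' t₀) := fun F hF t₀ =>
    hF.comp (contDiff_id.prodMk contDiff_const)
  have pt : ∀ (F : ℝ → ℝ → ℝ), ContDiff ℝ (⊤ : ℕ∞) (fun p : ℝ × ℝ => F p.1 p.2) →
      ∀ x₀ : ℝ, ContDiff ℝ (⊤ : ℕ∞) (fun t' => F x₀ t') := fun F hF x₀ =>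
    hF.comp (contDiff_const.prodMk contDiff_id)
  -- smoothness of the x-slices
  have s0 : ∀ i, ContDiff ℝ (⊤ : ℕ∞) (fun x' => f0 i x' t) := fun i => px _ (hsmooth0 i) t
  have sh : ∀ i, ContDiff ℝ (⊤ : ℕ∞) (fun x' => h i x' t) := fun i => px _ (hsmoothh i) t
  have d0 : ∀ i, Differentiable ℝ (fun x' => f0 i x' t) :=
    fun i => (s0 i).differentiable (by simp)
  have dh : ∀ i, Differentiable ℝ (fun x' => h i x' t) :=
    fun i => (sh i).differentiable (by simp)
  -- smoothness / differentiability of deriv of f0 slices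
  have sd0 : ∀ i, ContDiff ℝ ((⊤:ℕ∞):WithTop ℕ∞) (deriv (fun x' => f0 i x' t)) :=
    fun i => (contDiff_infty_iff_deriv.mp ((s0 i).of_le (by simp))).2
  have dd0 : ∀ i, Differentiable ℝ (deriv (fun x' => f0 i x' t)) :=
    fun i => (sd0 i).differentiable (by simp)
  -- abbreviations
  set A : Fin 3 → ℝ := fun i => deriv (fun t' => f0 i x t') t with hA
  set B : Fin 3 → ℝ := fun i => deriv (deriv (fun x' => f0 i x' t)) x with hB
  set Hd : Fin 3 → ℝ := fun i => deriv (fun x' => h i x' t) x with hHd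
  -- step: deriv (cᵢ² f0ᵢ) = cᵢ² • deriv f0ᵢ as functions
  have e0 : ∀ i, deriv (fun x' => cv i ^ 2 * f0 i x' t)
      = fun x' => cv i ^ 2 * deriv (fun x'' => f0 i x'' t) x' := by
    intro i
    funext y
    exact deriv_const_mul _ (d0 i y)
  -- second deriv of cᵢ² f0ᵢ
  have e0' : ∀ i, deriv (deriv (fun x' => cv i ^ 2 * f0 i x' t)) x = cv i ^ 2 * B i := by
    intro i
    rw [e0 i]
    exact deriv_const_mul _ (dd0 i x)
  -- f1 in terms of h and deriv f0
  have hf1 : ∀ i, (fun x' => cv i * f1 i x' t)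
      = fun x' => τ * (cv i * h i x' t) - τ * (cv i ^ 2 * deriv (fun x'' => f0 i x'' t) x') := by
    intro i
    funext y
    have h1 := hrel1 i y t
    rw [deriv_const_mul _ (d0 i y)] at h1
    field_simp at h1
    linear_combination cv i * h1
  -- deriv of cᵢ f1ᵢ at x
  have e1 : ∀ i, deriv (fun x' => cv i * f1 i x' t) x = τ * (cv i * Hd i) - τ * (cv i ^ 2 * B i) := by
    intro i
    rw [hf1 i]
    have dA : DifferentiableAt ℝ (fun x' => τ * (cv i * h i x' t)) x :=
      (((dh i).const_mul (cv i)).const_mul τ) x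
    have dB : DifferentiableAt ℝ
        (fun x' => τ * (cv i ^ 2 * deriv (fun x'' => f0 i x'' t) x')) x :=
      (((dd0 i).const_mul (cv i ^ 2)).const_mul τ) x
    rw [deriv_fun_sub dA dB,
      deriv_const_mul τ (((dh i).const_mul (cv i)) x),
      deriv_const_mul (cv i) ((dh i) x),
      deriv_const_mul τ (((dd0 i).const_mul (cv i ^ 2)) x),
      deriv_const_mul (cv i ^ 2) ((dd0 i) x)]
  -- per-i second order relation in atoms
  have rel2' : ∀ i, A i + (τ * (cv i * Hd i) - τ * (cv i ^ 2 * B i))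
      + (1 / 2) * (cv i ^ 2 * B i) + (1 / τ) * f2 i x t - m1 x t / 3 = 0 := by
    intro i
    have h2 := hrel2 i x t
    rw [e1 i] at h2
    rw [e0' i] at h2
    exact h2
  -- rewrite goal terms
  have g1 : deriv (fun t' => ∑ i : Fin 3, f0 i x t') t = ∑ i : Fin 3, A i := by
    rw [deriv_fun_sum]
    intro i _
    exact ((pt _ (hsmooth0 i) x).differentiable (by simp)) t
  have g2 : deriv (deriv (fun x' => ∑ i : Fin 3, cv i ^ 2 * f0 i x' t)) x
      = ∑ i : Fin 3, cv i ^ 2 * B i := by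
    have : deriv (fun x' => ∑ i : Fin 3, cv i ^ 2 * f0 i x' t)
        = fun x' => ∑ i : Fin 3, cv i ^ 2 * deriv (fun x'' => f0 i x'' t) x' := by
      funext y
      rw [deriv_fun_sum (fun i _ => ((d0 i).const_mul (cv i ^ 2)) y)]
      exact Finset.sum_congr rfl fun i _ => deriv_const_mul _ (d0 i y)
    rw [this, deriv_fun_sum (fun i _ => ((dd0 i).const_mul (cv i ^ 2)) x)]
    exact Finset.sum_congr rfl fun i _ => deriv_const_mul _ (dd0 i x)
  have g3 : deriv (fun x' => ∑ i : Fin 3, cv i * h i x' t) x = ∑ i : Fin 3, cv i * Hd i := by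
    rw [deriv_fun_sum (fun i _ => ((dh i).const_mul (cv i)) x)]
    exact Finset.sum_congr rfl fun i _ => deriv_const_mul _ ((dh i) x)
  rw [g1, g2, g3]
  have hc2 := hcons2 x t
  rw [Fin.sum_univ_three] at hc2
  have r0 := rel2' 0; have r1 := rel2' 1; have r2 := rel2' 2
  have hτ' : (1 / τ) * (f2 0 x t + f2 1 x t + f2 2 x t) = 0 := by rw [hc2]; ring
  simp only [Fin.sum_univ_three]
  linear_combination r0 + r1 + r2 - hτ'
end

section
/- Let c > 0, τ ≠ 0, η, λ, Δt be reals and set the D1Q3 discrete velocities c₀ = 0, c₁ = c, c₂ = −c. Let u : ℝ × ℝ → ℝ be twice continuously differentiable, define f⁰₀ = (1 − η)·u, f⁰₁ = f⁰₂ = (η/2)·u and h₀ = h₁ = (λ/3)·u², h₂ = −(2λ/3)·u², and suppose there exist functions f¹ᵢ, f²ᵢ : ℝ × ℝ → ℝ (i = 0,1,2) and m₁ : ℝ × ℝ → ℝ with Σᵢ f¹ᵢ = 0, Σᵢ f²ᵢ = 0, satisfying for each i and all (x,t) the first-order relation ∂ₓ(cᵢ·f⁰ᵢ) + (1/τ)·f¹ᵢ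 − hᵢ = 0 and the second-order relation ∂ₜ f⁰ᵢ + ∂ₓ(cᵢ·f¹ᵢ) + (1/2)·∂ₓₓ(cᵢ²·f⁰ᵢ) + (1/τ)·f²ᵢ − m₁/3 = 0 (with cᵢ·f¹ᵢ differentiable in x). Then u recovers the forced Burgers dynamics: for all (x,t), ∂u/∂t + 2·τ·c·λ·u·∂u/∂x + (1/2 − τ)·c²·η·∂²u/∂x² = m₁(x,t). -/
/-!
Solving the first-order relation for `f¹ᵢ` gives `f¹ᵢ = τ (kᵢ u² − cᵢ wᵢ uₓ)` for a population
with equilibrium `wᵢ u` and compensatory term `kᵢ u²`, so each second-order relation becomes an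
explicit identity in `uₜ, uₓ, uₓₓ` and `f²ᵢ`. Summing over the three velocities, the weights add
up to `1`, the `f²ᵢ` cancel by conservation, and the moments `Σ cᵢ kᵢ = cλ`, `Σ cᵢ² wᵢ = c²η`
produce the Burgers coefficients.
-/

theorem contDiff_slice_fst {u : ℝ → ℝ → ℝ} {n : WithTop ℕ∞}
    (hu : ContDiff ℝ n (fun p : ℝ × ℝ => u p.1 p.2)) (t : ℝ) :
    ContDiff ℝ n (fun x => u x t) :=
  hu.comp (contDiff_id.prodMk contDiff_const)

theorem deriv_const_mul_of_first_order_relation {g : ℝ → ℝ} (hg : ContDiff ℝ 2 g)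
    {v w k τ : ℝ} (hτ : τ ≠ 0) {f1 : ℝ → ℝ}
    (hrel1 : ∀ x, deriv (fun y => v * (w * g y)) x + (1 / τ) * f1 x - k * g x ^ 2 = 0)
    (x : ℝ) :
    deriv (fun y => v * f1 y) x
      = v * τ * (2 * k * g x * deriv g x - v * w * deriv (deriv g) x) := by
  have hf1 : f1 = fun y => τ * (k * g y ^ 2 - v * w * deriv g y) := by
    funext y
    have hy := hrel1 y
    rw [deriv_const_mul_field, deriv_const_mul_field] at hy
    field_simp at hy ⊢
    linarith
  have hg' : HasDerivAt g (deriv g x) x :=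
    (hg.differentiable (by norm_num) x).hasDerivAt
  have hg'' : HasDerivAt (deriv g) (deriv (deriv g) x) x := by
    have hg2 : ContDiff ℝ (1 + 1) g := hg
    exact ((contDiff_succ_iff_deriv.mp hg2).2.2.differentiable one_ne_zero x).hasDerivAt
  have hsq : HasDerivAt (fun y => g y ^ 2) (2 * g x * deriv g x) x := by
    simpa using hg'.fun_pow 2
  rw [hf1, ((((hsq.const_mul k).fun_sub (hg''.const_mul (v * w))).const_mul τ).const_mul v).deriv]
  ring

theorem second_order_relation_of_equilibrium {u : ℝ → ℝ → ℝ}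
    (hu : ContDiff ℝ 2 (fun p : ℝ × ℝ => u p.1 p.2)) {v w k τ : ℝ} (hτ : τ ≠ 0)
    {f0 h f1 f2 m1 : ℝ → ℝ → ℝ}
    (hf0 : ∀ x t, f0 x t = w * u x t) (hh : ∀ x t, h x t = k * u x t ^ 2)
    (hrel1 : ∀ x t, deriv (fun x' => v * f0 x' t) x + (1 / τ) * f1 x t - h x t = 0)
    (hrel2 : ∀ x t,
      deriv (fun t' => f0 x t') t + deriv (fun x' => v * f1 x' t) x
        + (1 / 2) * deriv (deriv (fun x' => v ^ 2 * f0 x' t)) x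
        + (1 / τ) * f2 x t - m1 x t / 3 = 0)
    (x t : ℝ) :
    w * deriv (fun t' => u x t') t
      + v * τ * (2 * k * u x t * deriv (fun x' => u x' t) x
        - v * w * deriv (deriv (fun x' => u x' t)) x)
      + v ^ 2 * w / 2 * deriv (deriv (fun x' => u x' t)) x
      + (1 / τ) * f2 x t - m1 x t / 3 = 0 := by
  obtain rfl : f0 = fun x t => w * u x t := funext₂ hf0
  obtain rfl : h = fun x t => k * u x t ^ 2 := funext₂ hh
  have hflux := deriv_const_mul_of_first_order_relation (contDiff_slice_fst hu t) hτ
    (fun x => hrel1 x t) x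
  have hdiffusion : deriv (deriv (fun x' => v ^ 2 * (w * u x' t))) x
      = v ^ 2 * w * deriv (deriv (fun x' => u x' t)) x := by
    simp_rw [← mul_assoc, deriv_const_mul_field']
  have hrel := hrel2 x t
  rw [deriv_const_mul_field, hflux, hdiffusion] at hrel
  linear_combination hrel

theorem lbm_recovers_forced_burgers_general
    (c τ η lam : ℝ) (hτ : τ ≠ 0)
    (cv : Fin 3 → ℝ) (hcv0 : cv 0 = 0) (hcv1 : cv 1 = c) (hcv2 : cv 2 = -c)
    (u : ℝ → ℝ → ℝ) (hu : ContDiff ℝ 2 (fun p : ℝ × ℝ => u p.1 p.2))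
    (f0 h : Fin 3 → ℝ → ℝ → ℝ)
    (hf00 : ∀ x t, f0 0 x t = (1 - η) * u x t)
    (hf01 : ∀ x t, f0 1 x t = (η / 2) * u x t)
    (hf02 : ∀ x t, f0 2 x t = (η / 2) * u x t)
    (hh0 : ∀ x t, h 0 x t = (lam / 3) * u x t ^ 2)
    (hh1 : ∀ x t, h 1 x t = (lam / 3) * u x t ^ 2)
    (hh2 : ∀ x t, h 2 x t = -(2 * lam / 3) * u x t ^ 2)
    (f1 f2 : Fin 3 → ℝ → ℝ → ℝ) (m1 : ℝ → ℝ → ℝ)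
    (hcons2 : ∀ x t : ℝ, (∑ i : Fin 3, f2 i x t) = 0)
    (hrel1 : ∀ i x t,
      deriv (fun x' => cv i * f0 i x' t) x + (1 / τ) * f1 i x t - h i x t = 0)
    (hrel2 : ∀ i x t,
      deriv (fun t' => f0 i x t') t
        + deriv (fun x' => cv i * f1 i x' t) x
        + (1 / 2) * deriv (deriv (fun x' => cv i ^ 2 * f0 i x' t)) x
        + (1 / τ) * f2 i x t - m1 x t / 3 = 0) :
    ∀ x t : ℝ,
      deriv (fun t' => u x t') t
        + 2 * τ * c * lam * u x t * deriv (fun x' => u x' t) x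
        + (1 / 2 - τ) * c ^ 2 * η * deriv (deriv (fun x' => u x' t)) x
        = m1 x t := by
  intro x t
  have E0 := second_order_relation_of_equilibrium hu hτ hf00 hh0 (hrel1 0) (hrel2 0) x t
  have E1 := second_order_relation_of_equilibrium hu hτ hf01 hh1 (hrel1 1) (hrel2 1) x t
  have E2 := second_order_relation_of_equilibrium hu hτ hf02 hh2 (hrel1 2) (hrel2 2) x t
  rw [hcv0] at E0
  rw [hcv1] at E1
  rw [hcv2] at E2
  have hsum := hcons2 x t
  rw [Fin.sum_univ_three] at hsum
  linear_combination E0 + E1 + E2 - (1 / τ) * hsum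

/-- with the concrete equilibrium distribution
`f⁰ = ((1−η)u, (η/2)u, (η/2)u)` and compensatory function
`h = ((λ/3)u², (λ/3)u², −(2λ/3)u²)`, the Chapman–Enskog relations recover the
forced Burgers dynamics `u_t + 2τcλ·u·u_x + (1/2 − τ)·c²η·u_xx = m₁`. -/
theorem lbm_recovers_forced_burgers
    (c τ η lam Δt : ℝ) (hc : 0 < c) (hτ : τ ≠ 0)
    (cv : Fin 3 → ℝ) (hcv0 : cv 0 = 0) (hcv1 : cv 1 = c) (hcv2 : cv 2 = -c)
    (u : ℝ → ℝ → ℝ) (hu : ContDiff ℝ 2 (fun p : ℝ × ℝ => u p.1 p.2))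
    (f0 h : Fin 3 → ℝ → ℝ → ℝ)
    (hf00 : ∀ x t, f0 0 x t = (1 - η) * u x t)
    (hf01 : ∀ x t, f0 1 x t = (η / 2) * u x t)
    (hf02 : ∀ x t, f0 2 x t = (η / 2) * u x t)
    (hh0 : ∀ x t, h 0 x t = (lam / 3) * u x t ^ 2)
    (hh1 : ∀ x t, h 1 x t = (lam / 3) * u x t ^ 2)
    (hh2 : ∀ x t, h 2 x t = -(2 * lam / 3) * u x t ^ 2)
    (f1 f2 : Fin 3 → ℝ → ℝ → ℝ) (m1 : ℝ → ℝ → ℝ)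
    (hcons1 : ∀ x t : ℝ, (∑ i : Fin 3, f1 i x t) = 0)
    (hcons2 : ∀ x t : ℝ, (∑ i : Fin 3, f2 i x t) = 0)
    (hdiff1 : ∀ i x t, DifferentiableAt ℝ (fun x' => cv i * f1 i x' t) x)
    (hrel1 : ∀ i x t,
      deriv (fun x' => cv i * f0 i x' t) x + (1 / τ) * f1 i x t - h i x t = 0)
    (hrel2 : ∀ i x t,
      deriv (fun t' => f0 i x t') t
        + deriv (fun x' => cv i * f1 i x' t) x
        + (1 / 2) * deriv (deriv (fun x' => cv i ^ 2 * f0 i x' t)) x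
        + (1 / τ) * f2 i x t - m1 x t / 3 = 0) :
    ∀ x t : ℝ,
      deriv (fun t' => u x t') t
        + 2 * τ * c * lam * u x t * deriv (fun x' => u x' t) x
        + (1 / 2 - τ) * c ^ 2 * η * deriv (deriv (fun x' => u x' t)) x
        = m1 x t :=
  lbm_recovers_forced_burgers_general c τ η lam hτ cv hcv0 hcv1 hcv2 u hu f0 h hf00 hf01 hf02 hh0
    hh1 hh2 f1 f2 m1 hcons2 hrel1 hrel2
end
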